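/- arXiv:1011.4505 — 2 statements merged into one kernel-verified Lean document; each statement's English description precedes it below -/
import Mathlib

section
/- Let S be a finite group, Q and R subgroups of S, and φ : Q → S, ψ : R → S injective group homomorphisms. Set Δ_Q^φ = {(u, φ(u)) : u ∈ Q} ≤ S × S and similarly Δ_R^ψ. Then the number of Δ_R^ψ-fixed points of the left coset space (S × S)/Δ_Q^φ equals (|N_{ψ,φ}| / |Q|) · |C_S(ψ(R))|, where N_{ψ,φ} = {x ∈ S : xRx⁻¹ ≤ Q and there exists y ∈ S with φ(x r x⁻¹) = y ψ(r) y⁻¹ for all r ∈ R}. -/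
/-!
The coset `g Δ_Q^φ` is fixed by `Δ_R^ψ` iff `g⁻¹ Δ_R^ψ g ≤ Δ_Q^φ`, so after inverting `g`,
`|fixed points| · |Δ_Q^φ|` counts the pairs `(x, y)` with `x R x⁻¹ ≤ Q` and
`φ (x r x⁻¹) = y ψ(r) y⁻¹` for all `r ∈ R`. For a fixed `x ∈ N_{ψ,φ}` the admissible `y` form a
single left coset of `C_S(ψ(R))`, and `|Δ_Q^φ| = |Q|` because `Δ_Q^φ` is the graph of `φ`.
-/

open MulAction

section CosetFixedPoints

variable {G : Type*} [Group G] (H K : Subgroup G)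

theorem QuotientGroup.mk_mem_fixedPoints_iff (g : G) :
    (g : G ⧸ H) ∈ fixedPoints K (G ⧸ H) ↔ ∀ k ∈ K, g⁻¹ * k * g ∈ H := by
  refine Subtype.forall.trans (forall₂_congr fun k _ => ?_)
  change ((k * g : G) : G ⧸ H) = g ↔ _
  rw [eq_comm, QuotientGroup.eq, mul_assoc]

theorem card_fixedPoints_quotient_mul_card :
    Nat.card (fixedPoints K (G ⧸ H)) * Nat.card H =
      Nat.card {g : G | ∀ k ∈ K, g * k * g⁻¹ ∈ H} := by
  rw [mul_comm, ← QuotientGroup.card_preimage_mk]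
  refine Nat.card_congr (Equiv.subtypeEquiv (Equiv.inv G) fun g => ?_)
  simp only [Set.mem_preimage, QuotientGroup.mk_mem_fixedPoints_iff, Equiv.inv_apply,
    Set.mem_ofPred_eq, inv_inv]

end CosetFixedPoints

theorem Nat.card_setOf_prod_of_fibers_eq_cosets {α G : Type*} [Group G] (P : α → G → Prop)
    (C : Subgroup G) (hP : ∀ x y z, P x y → (P x z ↔ y⁻¹ * z ∈ C)) :
    Nat.card {p : α × G | P p.1 p.2} = Nat.card {x | ∃ y, P x y} * Nat.card C := by
  choose y₀ hy₀ using fun x : {x | ∃ y, P x y} => x.2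
  rw [← Nat.card_prod]
  refine Nat.card_congr
    { toFun := fun p => (⟨p.1.1, p.1.2, p.2⟩, ⟨(y₀ ⟨p.1.1, p.1.2, p.2⟩)⁻¹ * p.1.2,
        (hP _ _ _ (hy₀ _)).1 p.2⟩)
      invFun := fun xc => ⟨(xc.1, y₀ xc.1 * xc.2),
        (hP _ _ _ (hy₀ xc.1)).2 (by simpa only [inv_mul_cancel_left] using xc.2.2)⟩
      left_inv := fun p => by simp
      right_inv := fun xc => by simp }

theorem Subgroup.card_range_subtype_prod {S M : Type*} [Group S] [Group M] {Q : Subgroup S}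
    (φ : Q →* M) : Nat.card (Q.subtype.prod φ).range = Nat.card Q :=
  (Nat.card_congr (MonoidHom.ofInjective (f := Q.subtype.prod φ)
    fun _ _ h => Subtype.ext (congrArg Prod.fst h)).toEquiv).symm

theorem conj_eq_conj_iff_mul_inv_mul_comm {G : Type*} [Group G] (a y z : G) :
    z * a * z⁻¹ = y * a * y⁻¹ ↔ a * (y⁻¹ * z) = y⁻¹ * z * a := by
  constructor <;> intro h
  · calc a * (y⁻¹ * z) = y⁻¹ * (y * a * y⁻¹) * z := by group
      _ = y⁻¹ * (z * a * z⁻¹) * z := by rw [h]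
      _ = y⁻¹ * z * a := by group
  · calc z * a * z⁻¹ = y * (y⁻¹ * z * a) * z⁻¹ := by group
      _ = y * (a * (y⁻¹ * z)) * z⁻¹ := by rw [← h]
      _ = y * a * y⁻¹ := by group

section Intertwining

variable {S : Type*} [Group S] {Q R : Subgroup S} (φ : Q →* S) (ψ : R →* S)

/-- The set `N_{ψ,φ}` is `{x | ∃ y, IntertwinedBy φ ψ x y}`. -/
def IntertwinedBy (x y : S) : Prop :=
  ∀ r : R, ∃ q : Q, (q : S) = x * r * x⁻¹ ∧ φ q = y * ψ r * y⁻¹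

theorem conj_mem_range_prod_iff_intertwinedBy (p : S × S) :
    (∀ k ∈ (R.subtype.prod ψ).range, p * k * p⁻¹ ∈ (Q.subtype.prod φ).range) ↔
      IntertwinedBy φ ψ p.1 p.2 := by
  refine (Set.forall_mem_range (f := R.subtype.prod ψ)).trans ?_
  simp only [MonoidHom.mem_range, MonoidHom.prod_apply, Subgroup.coe_subtype, Prod.ext_iff,
    Prod.fst_mul, Prod.snd_mul, Prod.fst_inv, Prod.snd_inv, IntertwinedBy]

theorem IntertwinedBy.intertwinedBy_iff {x y : S} (h : IntertwinedBy φ ψ x y) (z : S) :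
    IntertwinedBy φ ψ x z ↔ y⁻¹ * z ∈ Subgroup.centralizer (ψ.range : Set S) := by
  rw [Subgroup.mem_centralizer_iff, MonoidHom.coe_range, Set.forall_mem_range]
  refine forall_congr' fun r => ?_
  obtain ⟨q, hq, hφq⟩ := h r
  rw [← conj_eq_conj_iff_mul_inv_mul_comm, ← hφq]
  constructor
  · rintro ⟨q', hq', hφq'⟩
    rw [← Subtype.ext (hq'.trans hq.symm), hφq']
  · exact fun hφz => ⟨q, hq, hφz.symm⟩

end Intertwining

theorem card_fixed_points_transitive_biset_general (S : Type*) [Group S]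
    (Q R : Subgroup S) (φ : Q →* S) (ψ : R →* S) :
    Nat.card (MulAction.fixedPoints (↥(R.subtype.prod ψ).range)
        ((S × S) ⧸ (Q.subtype.prod φ).range)) * Nat.card Q =
      Nat.card {x : S | ∃ y : S, ∀ r : R,
          ∃ q : Q, (q : S) = x * r * x⁻¹ ∧ φ q = y * ψ r * y⁻¹} *
        Nat.card (Subgroup.centralizer (ψ.range : Set S)) := by
  rw [← Subgroup.card_range_subtype_prod φ, card_fixedPoints_quotient_mul_card]
  refine Eq.trans ?_ (Nat.card_setOf_prod_of_fibers_eq_cosets (IntertwinedBy φ ψ) _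
    fun _ _ z h => h.intertwinedBy_iff φ ψ z)
  simp only [conj_mem_range_prod_iff_intertwinedBy]

/-- The number of `Δ_R^ψ`-fixed points of the coset space `(S × S) ⧸ Δ_Q^φ` equals
`(|N_{ψ,φ}| / |Q|) · |C_S(ψ(R))|`, stated in the multiplied-out form
`|fixed points| · |Q| = |N_{ψ,φ}| · |C_S(ψ(R))|`. -/
theorem card_fixed_points_transitive_biset (S : Type*) [Group S] [Finite S]
    (Q R : Subgroup S) (φ : Q →* S) (ψ : R →* S)
    (hφ : Function.Injective φ) (hψ : Function.Injective ψ) :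
    Nat.card (MulAction.fixedPoints (↥(R.subtype.prod ψ).range)
        ((S × S) ⧸ (Q.subtype.prod φ).range)) * Nat.card Q =
      Nat.card {x : S | ∃ y : S, ∀ r : R,
          ∃ q : Q, (q : S) = x * r * x⁻¹ ∧ φ q = y * ψ r * y⁻¹} *
        Nat.card (Subgroup.centralizer (ψ.range : Set S)) :=
  card_fixed_points_transitive_biset_general S Q R φ ψ
end

section
/- Let S be a finite group, R ≤ S, and let α : S → S be an automorphism and ψ : R → S an injective homomorphism. Then the number of Δ_R^ψ-fixed points of the coset space (S × S)/Δ_S^α is |C_S(ψ(R))| if there exist x, y ∈ S with α(x r x⁻¹) = y ψ(r) y⁻¹ for all r ∈ R, and 0 otherwise. -/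
/-!
Identifying `(S × T) ⧸ Δ^α` with `T` through `(a, b) ↦ b * (α a)⁻¹` turns the action of `S × T`
into `(g, h) • t = h * t * (α g)⁻¹`. The `Δ_R^ψ`-fixed points are then the `t` with
`ψ r * t = t * α r` for all `r ∈ R`: there are none unless `ψ` is conjugate to `α` restricted
to `R`, and otherwise they form a right coset of the centralizer of `ψ(R)`.
-/

open MulAction

section Intertwiners

variable {H G : Type*} [Group H] [Group G]

theorem card_intertwiners_eq_card_centralizer (f g : H →* G) {s₀ : G}
    (hs₀ : ∀ h, f h * s₀ = s₀ * g h) :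
    Nat.card {s : G // ∀ h, f h * s = s * g h} =
      Nat.card (Subgroup.centralizer (f.range : Set G)) := by
  refine Nat.card_congr ((Equiv.mulRight s₀⁻¹).subtypeEquiv fun s => ?_)
  have hg : ∀ h, g h = s₀⁻¹ * f h * s₀ := fun h => by rw [mul_assoc, hs₀]; group
  simp only [Equiv.coe_mulRight, Subgroup.mem_centralizer_iff, MonoidHom.coe_range,
    Set.forall_mem_range, hg]
  refine forall_congr' fun h => ?_
  constructor <;> intro hs
  · rw [← mul_assoc, hs]; group
  · calc f h * s = f h * (s * s₀⁻¹) * s₀ := by group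
      _ = _ := by rw [hs]; group

end Intertwiners

section GraphQuotient

variable {S T : Type*} [Group S] [Group T] (α : S →* T)

theorem mk_eq_mk_graph_iff (p q : S × T) :
    (p : (S × T) ⧸ α.graph) = q ↔ p.2 * (α p.1)⁻¹ = q.2 * (α q.1)⁻¹ := by
  rw [QuotientGroup.eq, MonoidHom.mem_graph]
  simp only [Prod.fst_mul, Prod.snd_mul, Prod.fst_inv, Prod.snd_inv, map_mul, map_inv]
  rw [eq_inv_mul_iff_mul_eq, eq_mul_inv_iff_mul_eq, mul_assoc]

def graphQuotientEquiv : (S × T) ⧸ α.graph ≃ T where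
  toFun := Quotient.lift (fun p => p.2 * (α p.1)⁻¹) fun p q h =>
    (mk_eq_mk_graph_iff α p q).1 (Quotient.sound h)
  invFun t := ((1, t) : S × T)
  left_inv := Quotient.ind' fun p => (mk_eq_mk_graph_iff α _ p).2 (by simp)
  right_inv t := by simp

theorem graphQuotientEquiv_mk (p : S × T) :
    graphQuotientEquiv α (p : (S × T) ⧸ α.graph) = p.2 * (α p.1)⁻¹ := rfl

theorem graphQuotientEquiv_smul (g : S × T) (q : (S × T) ⧸ α.graph) :
    graphQuotientEquiv α (g • q) = g.2 * graphQuotientEquiv α q * (α g.1)⁻¹ := by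
  induction q using QuotientGroup.induction_on with
  | H p => simp [graphQuotientEquiv_mk, mul_assoc]

def fixedPointsGraphQuotientEquiv {R : Type*} [Group R] (φ : R →* S) (ψ : R →* T) :
    fixedPoints (φ.prod ψ).range ((S × T) ⧸ α.graph) ≃
      {t : T // ∀ r, ψ r * t = t * α (φ r)} :=
  (graphQuotientEquiv α).subtypeEquiv fun q => by
    rw [mem_fixedPoints, (φ.prod ψ).rangeRestrict_surjective.forall]
    refine forall_congr' fun r => ?_
    change (φ r, ψ r) • q = q ↔ _
    rw [← (graphQuotientEquiv α).injective.eq_iff, graphQuotientEquiv_smul, mul_inv_eq_iff_eq_mul]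

end GraphQuotient

theorem exists_map_conj_eq_conj_iff {S T : Type*} [Group S] [Group T] {R : Subgroup S}
    (α : S →* T) (ψ : R →* T) :
    (∃ (x : S) (y : T), ∀ r : R, α (x * r * x⁻¹) = y * ψ r * y⁻¹) ↔
      ∃ t : T, ∀ r : R, ψ r * t = t * α r := by
  constructor
  · rintro ⟨x, y, h⟩
    refine ⟨y⁻¹ * α x, fun r => ?_⟩
    have hr := h r
    rw [map_mul, map_mul, map_inv] at hr
    calc ψ r * (y⁻¹ * α x) = y⁻¹ * (y * ψ r * y⁻¹) * α x := by group
      _ = y⁻¹ * α x * α r := by rw [← hr]; group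
  · rintro ⟨t, ht⟩
    refine ⟨1, t⁻¹, fun r => ?_⟩
    rw [one_mul, inv_one, mul_one, inv_inv, mul_assoc, ht, inv_mul_cancel_left]

open scoped Classical in
theorem card_fixed_points_top_transitive_biset_general (S : Type*) [Group S]
    (R : Subgroup S) (α : S ≃* S) (ψ : R →* S) :
    Nat.card (MulAction.fixedPoints (↥(R.subtype.prod ψ).range)
        ((S × S) ⧸ ((MonoidHom.id S).prod α.toMonoidHom).range)) =
      if ∃ x y : S, ∀ r : R, α (x * r * x⁻¹) = y * ψ r * y⁻¹ then
        Nat.card (Subgroup.centralizer (ψ.range : Set S))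
      else 0 := by
  rw [← MonoidHom.graph_eq_range_prod,
    Nat.card_congr (fixedPointsGraphQuotientEquiv α.toMonoidHom R.subtype ψ)]
  split_ifs with h
  · obtain ⟨t, ht⟩ := (exists_map_conj_eq_conj_iff α.toMonoidHom ψ).1 h
    exact card_intertwiners_eq_card_centralizer ψ (α.toMonoidHom.comp R.subtype) ht
  · rw [Nat.card_eq_zero]
    exact .inl ⟨fun t => h ((exists_map_conj_eq_conj_iff α.toMonoidHom ψ).2 ⟨t, t.2⟩)⟩

open scoped Classical in
/-- The number of `Δ_R^ψ`-fixed points of `(S × S) ⧸ Δ_S^α` is `|C_S(ψ(R))|` if `ψ` is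
`(S,S)`-subconjugate to `α`, and `0` otherwise. -/
theorem card_fixed_points_top_transitive_biset (S : Type*) [Group S] [Finite S]
    (R : Subgroup S) (α : S ≃* S) (ψ : R →* S) (hψ : Function.Injective ψ) :
    Nat.card (MulAction.fixedPoints (↥(R.subtype.prod ψ).range)
        ((S × S) ⧸ ((MonoidHom.id S).prod α.toMonoidHom).range)) =
      if ∃ x y : S, ∀ r : R, α (x * r * x⁻¹) = y * ψ r * y⁻¹ then
        Nat.card (Subgroup.centralizer (ψ.range : Set S))
      else 0 :=
  card_fixed_points_top_transitive_biset_general S R α ψ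
end
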